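/- arXiv:2308.13110 — 2 statements merged into one kernel-verified Lean document; each statement's English description precedes it below -/
import Mathlib

section
/- Let (C_n) and C be nonempty compact convex subsets of ℝ^d, and let W be a countable dense subset of the closed unit ball of ℝ^d. If s(x*, C_n) → s(x*, C) for every x* ∈ W, then C_n converges to C in the Hausdorff metric. -/
/-! From a finite `1/2`-net of the unit ball taken inside `W`, convergence of the support
functions bounds all `C n` from some index on in a common ball of radius `R`; the support
functions are then `R`-Lipschitz, so convergence on the dense set `W` is uniform on the unit
sphere. For nonempty compact convex sets the Hausdorff distance is at most the uniform distance
of the support functions on the sphere: a point `x` at distance more than `ε` from `L` is separated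
from the closed convex set `cthickening ε L` by a hyperplane, whose unit normal `y` violates
`⟪y, x⟫ ≤ s(y, L) + ε`. -/

open Metric Filter

/-- Support function of a set `C ⊆ ℝ^d`. -/
noncomputable def suppFn {d : ℕ} (y : EuclideanSpace ℝ (Fin d))
    (C : Set (EuclideanSpace ℝ (Fin d))) : ℝ :=
  sSup ((fun x => (inner ℝ y x : ℝ)) '' C)

open Set Topology
open scoped NNReal RealInnerProductSpace

theorem IsCompact.exists_finite_cover_balls_of_subset_closure {X : Type*} [PseudoMetricSpace X]
    {S W : Set X} (hS : IsCompact S) (hSW : S ⊆ closure W) {δ : ℝ} (hδ : 0 < δ) :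
    ∃ F ⊆ W, F.Finite ∧ S ⊆ ⋃ w ∈ F, ball w δ := by
  refine hS.elim_finite_subcover_image (fun _ _ => isOpen_ball) fun x hx => ?_
  obtain ⟨w, hw, hxw⟩ := Metric.mem_closure_iff.1 (hSW hx) δ hδ
  exact mem_biUnion hw (mem_ball.2 hxw)

theorem tendstoUniformlyOn_of_lipschitzWith_of_tendsto {X ι : Type*} [PseudoMetricSpace X]
    {l : Filter ι} {S W : Set X} (hS : IsCompact S) (hSW : S ⊆ closure W) {K : ℝ≥0}
    {f : ι → X → ℝ} {g : X → ℝ} (hf : ∀ᶠ i in l, LipschitzWith K (f i)) (hg : LipschitzWith K g)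
    (h : ∀ w ∈ W, Tendsto (fun i => f i w) l (𝓝 (g w))) :
    TendstoUniformlyOn f g l S := by
  rw [Metric.tendstoUniformlyOn_iff]
  intro ε hε
  set δ := ε / (3 * (K + 1))
  have hδ : 0 < δ := by positivity
  have hKδ : K * δ ≤ ε / 3 := by
    rw [mul_div_assoc', div_le_div_iff₀ (by positivity) (by norm_num)]
    nlinarith [K.coe_nonneg]
  obtain ⟨F, hFW, hF, hSF⟩ := hS.exists_finite_cover_balls_of_subset_closure hSW hδ
  have hnet : ∀ᶠ i in l, ∀ w ∈ F, dist (f i w) (g w) < ε / 3 :=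
    (eventually_all_finite hF).2 fun w hw =>
      Metric.tendsto_nhds.1 (h w (hFW hw)) _ (by positivity)
  filter_upwards [hf, hnet] with i hfi hi x hx
  obtain ⟨w, hwF, hxw⟩ := mem_iUnion₂.1 (hSF hx)
  have hxw : dist x w ≤ δ := (mem_ball.1 hxw).le
  have hg' : dist (g x) (g w) ≤ K * δ := (hg.dist_le_mul x w).trans (by gcongr)
  have hfi' : dist (f i w) (f i x) ≤ K * δ :=
    (hfi.dist_le_mul w x).trans (by rw [dist_comm]; gcongr)
  calc dist (g x) (f i x) ≤ dist (g x) (g w) + dist (g w) (f i w) + dist (f i w) (f i x) :=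
        dist_triangle4 _ _ _ _
    _ < ε := by linarith [hi w hwF, dist_comm (g w) (f i w)]

section InnerProductSpace

variable {E : Type*} [NormedAddCommGroup E] [InnerProductSpace ℝ E]

theorem exists_norm_eq_one_inner_lt_of_notMem [CompleteSpace E] {S : Set E} (hne : S.Nonempty)
    (hcv : Convex ℝ S) (hcl : IsClosed S) {x : E} (hx : x ∉ S) :
    ∃ w : E, ‖w‖ = 1 ∧ ∃ u : ℝ, (∀ a ∈ S, ⟪w, a⟫ < u) ∧ u < ⟪w, x⟫ := by
  obtain ⟨f, u, hfS, hfx⟩ := geometric_hahn_banach_closed_point hcv hcl hx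
  set y := (InnerProductSpace.toDual ℝ E).symm f
  have hyf : ∀ z, ⟪y, z⟫ = f z := fun z => InnerProductSpace.toDual_symm_apply
  have hy : 0 < ‖y‖ := by
    refine norm_pos_iff.2 fun hy0 => ?_
    obtain ⟨a, ha⟩ := hne
    have := (hfS a ha).trans hfx
    simp [← hyf, hy0] at this
  refine ⟨‖y‖⁻¹ • y, norm_smul_inv_norm (norm_pos_iff.1 hy), u / ‖y‖, fun a ha => ?_, ?_⟩
  · rw [real_inner_smul_left, hyf, inv_mul_eq_div]
    exact div_lt_div_of_pos_right (hfS a ha) hy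
  · rw [real_inner_smul_left, hyf, inv_mul_eq_div]
    exact div_lt_div_of_pos_right hfx hy

theorem norm_le_two_mul_of_forall_inner_le {F : Set E}
    (hF : closedBall (0 : E) 1 ⊆ ⋃ w ∈ F, ball w (1 / 2)) {x : E} {M : ℝ}
    (hx : ∀ w ∈ F, ⟪w, x⟫ ≤ M) : ‖x‖ ≤ 2 * M := by
  set y := ‖x‖⁻¹ • x
  have hy : y ∈ closedBall (0 : E) 1 := by
    rw [mem_closedBall_zero_iff, norm_smul, norm_inv, norm_norm]
    exact inv_mul_le_one
  obtain ⟨w, hwF, hyw⟩ := mem_iUnion₂.1 (hF hy)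
  have hyw : ‖y - w‖ ≤ 1 / 2 := by rw [← dist_eq_norm]; exact (mem_ball.1 hyw).le
  have hyx : ⟪y, x⟫ = ‖x‖ := by
    rw [real_inner_smul_left, real_inner_self_eq_norm_sq, sq, ← mul_assoc, inv_mul_mul_self]
  have hyw_x : ⟪y - w, x⟫ ≤ 1 / 2 * ‖x‖ :=
    (real_inner_le_norm _ _).trans (by gcongr)
  rw [inner_sub_left, hyx] at hyw_x
  linarith [hx w hwF]

end InnerProductSpace

section SupportFunction

variable {d : ℕ}

theorem inner_le_suppFn {K : Set (EuclideanSpace ℝ (Fin d))} (hK : IsCompact K)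
    {x : EuclideanSpace ℝ (Fin d)} (hx : x ∈ K) (y : EuclideanSpace ℝ (Fin d)) :
    ⟪y, x⟫ ≤ suppFn y K :=
  le_csSup (hK.image (continuous_const.inner continuous_id)).bddAbove (mem_image_of_mem _ hx)

theorem suppFn_le {K : Set (EuclideanSpace ℝ (Fin d))} (hK : K.Nonempty)
    {y : EuclideanSpace ℝ (Fin d)} {c : ℝ} (h : ∀ x ∈ K, ⟪y, x⟫ ≤ c) : suppFn y K ≤ c :=
  csSup_le (hK.image _) (forall_mem_image.2 h)

theorem lipschitzWith_suppFn {K : Set (EuclideanSpace ℝ (Fin d))} (hKne : K.Nonempty)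
    (hK : IsCompact K) {R : ℝ≥0} (hKR : K ⊆ closedBall 0 R) :
    LipschitzWith R fun y => suppFn y K := by
  refine LipschitzWith.of_le_add_mul R fun y y' => suppFn_le hKne fun x hx => ?_
  have hxR : ‖x‖ ≤ R := mem_closedBall_zero_iff.1 (hKR hx)
  calc ⟪y, x⟫ = ⟪y', x⟫ + ⟪y - y', x⟫ := by rw [inner_sub_left]; ring
    _ ≤ suppFn y' K + ‖y - y'‖ * ‖x‖ :=
        add_le_add (inner_le_suppFn hK hx y') (real_inner_le_norm _ _)
    _ ≤ suppFn y' K + R * dist y y' := by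
        rw [dist_eq_norm, mul_comm]; gcongr

theorem mem_cthickening_of_forall_inner_le_suppFn_add {K : Set (EuclideanSpace ℝ (Fin d))}
    (hK : K.Nonempty) (hcv : Convex ℝ K) {ε : ℝ} (hε : 0 ≤ ε) {x : EuclideanSpace ℝ (Fin d)}
    (hx : ∀ y ∈ sphere 0 1, ⟪y, x⟫ ≤ suppFn y K + ε) : x ∈ cthickening ε K := by
  by_contra hxK
  obtain ⟨w, hw, u, hu, hux⟩ := exists_norm_eq_one_inner_lt_of_notMem
    (hK.mono (self_subset_cthickening K)) (hcv.cthickening ε) isClosed_cthickening hxK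
  have hwK : suppFn w K ≤ u - ε := by
    refine suppFn_le hK fun a ha => ?_
    have hmem : a + ε • w ∈ cthickening ε K :=
      mem_cthickening_of_dist_le _ a _ _ ha (by
        rw [dist_eq_norm, add_sub_cancel_left, norm_smul, hw, mul_one, Real.norm_of_nonneg hε])
    have := hu _ hmem
    rw [inner_add_right, real_inner_smul_right, real_inner_self_eq_norm_sq, hw] at this
    linarith
  linarith [hx w (mem_sphere_zero_iff_norm.2 hw)]

theorem hausdorffDist_le_of_dist_suppFn_le {K L : Set (EuclideanSpace ℝ (Fin d))}
    (hKne : K.Nonempty) (hKcp : IsCompact K) (hKcv : Convex ℝ K)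
    (hLne : L.Nonempty) (hLcp : IsCompact L) (hLcv : Convex ℝ L) {ε : ℝ} (hε : 0 ≤ ε)
    (h : ∀ y ∈ sphere 0 1, dist (suppFn y K) (suppFn y L) ≤ ε) : hausdorffDist K L ≤ ε := by
  have h' y (hy : y ∈ sphere (0 : EuclideanSpace ℝ (Fin d)) 1) := abs_sub_le_iff.1 (h y hy)
  refine hausdorffDist_le_of_infDist hε (fun x hx => ?_) (fun x hx => ?_) <;>
    refine ENNReal.toReal_le_of_le_ofReal hε (mem_cthickening_iff.1 ?_)
  · exact mem_cthickening_of_forall_inner_le_suppFn_add hLne hLcv hε fun y hy =>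
      (inner_le_suppFn hKcp hx y).trans (by linarith [h' y hy])
  · exact mem_cthickening_of_forall_inner_le_suppFn_add hKne hKcv hε fun y hy =>
      (inner_le_suppFn hLcp hx y).trans (by linarith [h' y hy])

theorem exists_eventually_subset_closedBall_of_tendsto_suppFn {ι : Type*} {l : Filter ι}
    {C : ι → Set (EuclideanSpace ℝ (Fin d))} (hC : ∀ i, IsCompact (C i))
    {W : Set (EuclideanSpace ℝ (Fin d))} (hW : closedBall 0 1 ⊆ closure W)
    {g : EuclideanSpace ℝ (Fin d) → ℝ}
    (h : ∀ y ∈ W, Tendsto (fun i => suppFn y (C i)) l (𝓝 (g y))) :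
    ∃ R : ℝ≥0, ∀ᶠ i in l, C i ⊆ closedBall 0 R := by
  obtain ⟨F, hFW, hF, hcover⟩ :=
    (isCompact_closedBall 0 1).exists_finite_cover_balls_of_subset_closure hW one_half_pos
  obtain ⟨M, hM⟩ := (hF.image g).bddAbove
  have hbound : ∀ᶠ i in l, ∀ w ∈ F, suppFn w (C i) ≤ M + 1 :=
    (eventually_all_finite hF).2 fun w hw =>
      ((h w (hFW hw)).eventually_lt_const
        ((hM (mem_image_of_mem g hw)).trans_lt (lt_add_one M))).mono fun _ => le_of_lt
  refine ⟨(2 * (M + 1)).toNNReal, ?_⟩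
  filter_upwards [hbound] with i hi x hx
  rw [mem_closedBall_zero_iff, Real.coe_toNNReal']
  exact le_max_of_le_left <| norm_le_two_mul_of_forall_inner_le hcover fun w hw =>
    (inner_le_suppFn (hC i) hx w).trans (hi w hw)

end SupportFunction

theorem stmt_4_general {d : ℕ} (C : ℕ → Set (EuclideanSpace ℝ (Fin d)))
    (L : Set (EuclideanSpace ℝ (Fin d)))
    (hne : ∀ n, (C n).Nonempty) (hcp : ∀ n, IsCompact (C n)) (hcv : ∀ n, Convex ℝ (C n))
    (hLne : L.Nonempty) (hLcp : IsCompact L) (hLcv : Convex ℝ L)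
    (W : Set (EuclideanSpace ℝ (Fin d)))
    (hWd : closedBall (0 : EuclideanSpace ℝ (Fin d)) 1 ⊆ closure W)
    (hconv : ∀ y ∈ W, Tendsto (fun n => suppFn y (C n)) atTop (nhds (suppFn y L))) :
    Tendsto (fun n => hausdorffDist (C n) L) atTop (nhds 0) := by
  obtain ⟨R₁, hCR₁⟩ := exists_eventually_subset_closedBall_of_tendsto_suppFn hcp hWd hconv
  obtain ⟨r, hLr⟩ := hLcp.isBounded.subset_closedBall 0
  set R : ℝ≥0 := max R₁ r.toNNReal
  have hLR : L ⊆ closedBall 0 R :=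
    hLr.trans (closedBall_subset_closedBall ((Real.le_coe_toNNReal r).trans (by simp [R])))
  have hCR : ∀ᶠ n in atTop, C n ⊆ closedBall 0 R :=
    hCR₁.mono fun n hn => hn.trans (closedBall_subset_closedBall (by simp [R]))
  have hunif : TendstoUniformlyOn (fun n y => suppFn y (C n)) (fun y => suppFn y L) atTop
      (sphere 0 1) :=
    tendstoUniformlyOn_of_lipschitzWith_of_tendsto (isCompact_sphere 0 1)
      (sphere_subset_closedBall.trans hWd)
      (hCR.mono fun n hn => lipschitzWith_suppFn (hne n) (hcp n) hn)
      (lipschitzWith_suppFn hLne hLcp hLR) hconv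
  refine tendsto_order.2 ⟨fun a ha => .of_forall fun n => ha.trans_le hausdorffDist_nonneg,
    fun ε hε => ?_⟩
  filter_upwards [Metric.tendstoUniformlyOn_iff.1 hunif (ε / 2) (half_pos hε)] with n hn
  refine (hausdorffDist_le_of_dist_suppFn_le (hne n) (hcp n) (hcv n) hLne hLcp hLcv
    (half_pos hε).le fun y hy => ?_).trans_lt (half_lt_self hε)
  rw [dist_comm]
  exact (hn y hy).le

/-- For nonempty compact convex sets, scalar convergence of support functions on a countable
dense subset of the closed unit ball implies Hausdorff convergence. -/
theorem stmt_4 {d : ℕ} (C : ℕ → Set (EuclideanSpace ℝ (Fin d)))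
    (L : Set (EuclideanSpace ℝ (Fin d)))
    (hne : ∀ n, (C n).Nonempty) (hcp : ∀ n, IsCompact (C n)) (hcv : ∀ n, Convex ℝ (C n))
    (hLne : L.Nonempty) (hLcp : IsCompact L) (hLcv : Convex ℝ L)
    (W : Set (EuclideanSpace ℝ (Fin d))) (hWc : W.Countable)
    (hWs : W ⊆ closedBall (0 : EuclideanSpace ℝ (Fin d)) 1)
    (hWd : closedBall (0 : EuclideanSpace ℝ (Fin d)) 1 ⊆ closure W)
    (hconv : ∀ y ∈ W, Tendsto (fun n => suppFn y (C n)) atTop (nhds (suppFn y L))) :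
    Tendsto (fun n => hausdorffDist (C n) L) atTop (nhds 0) :=
  stmt_4_general C L hne hcp hcv hLne hLcp hLcv W hWd hconv
end

section
/- Let (Ω, F, P) be a probability space, G a sub-σ-algebra of F, p ≥ 1, and K a nonempty subset of L^p(Ω, G; ℝ^d). Then K is dominated in L^p (i.e., there exists ξ ∈ L^p(Ω; ℝ) with |ζ| ≤ ξ a.s. for all ζ ∈ K) if and only if the G-decomposable hull dec_G(K) is bounded in L^p (i.e., sup over its elements of E[|·|^p] is finite). -/
/-!
Pasting two elements of the hull along a `G`-measurable set stays in the hull, so the functions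
`‖g‖ ^ p`, `g ∈ dec_G(K)`, form a family closed under pointwise maxima. For such a family with
bounded integrals, the partial maxima of a sequence whose integrals approach the supremum increase
to an essential supremum `Φ` of finite integral: every member `f` has `∫ max Φ f ≤ ∫ Φ`, hence
`f ≤ Φ` a.e., and `Φ ^ (1 / p)` dominates `K` in `L^p`. Conversely, each element of the hull agrees
pointwise with one of finitely many elements of `K`, so it inherits their a.e. domination.
-/

open MeasureTheory ENNReal

/-- The `G`-decomposable hull of a set `K` of functions: finite sums `∑ᵢ ξⁱ 1_{Aᵢ}` over
`G`-measurable finite partitions of `Ω` with `ξⁱ ∈ K`. -/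
def decHull {Ω E : Type*} [AddCommMonoid E] (G : MeasurableSpace Ω)
    (K : Set (Ω → E)) : Set (Ω → E) :=
  { g | ∃ (n : ℕ) (ξ : Fin n → Ω → E) (A : Fin n → Set Ω),
      (∀ i, ξ i ∈ K) ∧ (∀ i, MeasurableSet[G] (A i)) ∧
      Pairwise (Function.onFun Disjoint A) ∧ (⋃ i, A i) = Set.univ ∧
      g = fun ω => ∑ i, (A i).indicator (ξ i) ω }

section DecHull

variable {Ω E : Type*} [AddCommMonoid E] {G : MeasurableSpace Ω} {K : Set (Ω → E)}

theorem mem_decHull_iff {g : Ω → E} :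
    g ∈ decHull G K ↔ ∃ (n : ℕ) (ξ : Fin n → Ω → E) (σ : Ω → Fin n),
      (∀ i, ξ i ∈ K) ∧ Measurable[G] σ ∧ g = fun ω => ξ (σ ω) ω := by
  constructor
  · rintro ⟨n, ξ, A, hξ, hA, hdisj, hcov, rfl⟩
    choose σ hσ using fun ω => Set.mem_iUnion.1 (hcov ▸ Set.mem_univ ω)
    have hσA : ∀ ω i, σ ω = i ↔ ω ∈ A i := fun ω i =>
      ⟨by rintro rfl; exact hσ ω, fun h => hdisj.eq (Set.not_disjoint_iff.2 ⟨ω, hσ ω, h⟩)⟩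
    refine ⟨n, ξ, σ, hξ, measurable_to_countable' fun i => ?_, funext fun ω => ?_⟩
    · rw [show σ ⁻¹' {i} = A i from Set.ext fun ω => hσA ω i]
      exact hA i
    · rw [Fintype.sum_eq_single (σ ω) fun i hi =>
        Set.indicator_of_notMem (fun h => hi ((hσA ω i).2 h).symm) _, Set.indicator_of_mem (hσ ω)]
  · rintro ⟨n, ξ, σ, hξ, hσ, rfl⟩
    refine ⟨n, ξ, fun i => σ ⁻¹' {i}, hξ, fun i => hσ (measurableSet_singleton i),
      fun i j hij => Set.disjoint_left.2 fun ω hi hj => hij (hi.symm.trans hj),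
      Set.iUnion_eq_univ_iff.2 fun ω => ⟨σ ω, rfl⟩, funext fun ω => ?_⟩
    show _ = ∑ i, (σ ⁻¹' {i}).indicator (ξ i) ω
    rw [Fintype.sum_eq_single (σ ω) fun i hi => Set.indicator_of_notMem (fun h => hi h.symm) _,
      Set.indicator_of_mem (s := σ ⁻¹' {σ ω}) rfl]

theorem subset_decHull : K ⊆ decHull G K := fun f hf =>
  mem_decHull_iff.2 ⟨1, fun _ => f, fun _ => 0, fun _ => hf, measurable_const, rfl⟩

theorem piecewise_mem_decHull {g₁ g₂ : Ω → E} (h₁ : g₁ ∈ decHull G K) (h₂ : g₂ ∈ decHull G K)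
    {B : Set Ω} [DecidablePred (· ∈ B)] (hB : MeasurableSet[G] B) :
    B.piecewise g₁ g₂ ∈ decHull G K := by
  obtain ⟨n, ξ, σ, hξ, hσ, rfl⟩ := mem_decHull_iff.1 h₁
  obtain ⟨m, ξ', σ', hξ', hσ', rfl⟩ := mem_decHull_iff.1 h₂
  refine mem_decHull_iff.2 ⟨n + m, Fin.append ξ ξ',
    B.piecewise (Fin.castAdd m ∘ σ) (Fin.natAdd n ∘ σ'),
    Fin.addCases (by simpa using hξ) (by simpa using hξ'),
    (measurable_from_top.comp hσ).piecewise hB (measurable_from_top.comp hσ'), funext fun ω => ?_⟩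
  by_cases hω : ω ∈ B <;> simp [hω]

theorem ae_of_mem_decHull {mΩ : MeasurableSpace Ω} {μ : Measure Ω} {P : Ω → E → Prop}
    (hK : ∀ f ∈ K, ∀ᵐ ω ∂μ, P ω (f ω)) {g : Ω → E} (hg : g ∈ decHull G K) :
    ∀ᵐ ω ∂μ, P ω (g ω) := by
  obtain ⟨n, ξ, σ, hξ, -, rfl⟩ := mem_decHull_iff.1 hg
  filter_upwards [ae_all_iff.2 fun i => hK _ (hξ i)] with ω hω using hω (σ ω)

variable [TopologicalSpace E] [ContinuousAdd E]

theorem stronglyMeasurable_of_mem_decHull (hK : ∀ f ∈ K, StronglyMeasurable[G] f) {g : Ω → E}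
    (hg : g ∈ decHull G K) : StronglyMeasurable[G] g := by
  obtain ⟨n, ξ, A, hξ, hA, -, -, rfl⟩ := hg
  exact Finset.stronglyMeasurable_fun_sum _ fun i _ => (hK _ (hξ i)).indicator (hA i)

theorem supClosed_image_decHull (hK : ∀ f ∈ K, StronglyMeasurable[G] f) {Ψ : E → ℝ≥0∞}
    (hΨ : Continuous Ψ) : SupClosed ((fun g ω => Ψ (g ω)) '' decHull G K) := by
  classical
  rintro _ ⟨g₁, h₁, rfl⟩ _ ⟨g₂, h₂, rfl⟩
  have hB : MeasurableSet[G] {ω | Ψ (g₂ ω) ≤ Ψ (g₁ ω)} := measurableSet_le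
    (hΨ.comp_stronglyMeasurable (stronglyMeasurable_of_mem_decHull hK h₂)).measurable
    (hΨ.comp_stronglyMeasurable (stronglyMeasurable_of_mem_decHull hK h₁)).measurable
  refine ⟨_, piecewise_mem_decHull h₁ h₂ hB, funext fun ω => ?_⟩
  by_cases hω : Ψ (g₂ ω) ≤ Ψ (g₁ ω)
  · simp [hω]
  · simp [hω, le_of_not_ge hω]

end DecHull

section EssentialSupremum

variable {Ω : Type*} {mΩ : MeasurableSpace Ω} {μ : Measure Ω}

theorem lintegral_iSup_le_biSup_of_monotone {S : Set (Ω → ℝ≥0∞)} (hS : ∀ f ∈ S, Measurable f)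
    {F : ℕ → Ω → ℝ≥0∞} (hF : Monotone F) (hFS : ∀ n, F n ∈ S) :
    ∫⁻ ω, ⨆ n, F n ω ∂μ ≤ ⨆ f ∈ S, ∫⁻ ω, f ω ∂μ := by
  rw [lintegral_iSup (fun n => hS _ (hFS n)) hF]
  exact iSup_le fun n => le_biSup (fun f => ∫⁻ ω, f ω ∂μ) (hFS n)

theorem SupClosed.exists_ae_le_of_iSup_lintegral_ne_top {S : Set (Ω → ℝ≥0∞)} (hS : SupClosed S)
    (hmeas : ∀ f ∈ S, Measurable f) (hfin : ⨆ f ∈ S, ∫⁻ ω, f ω ∂μ ≠ ∞) :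
    ∃ Φ : Ω → ℝ≥0∞, Measurable Φ ∧ ∫⁻ ω, Φ ω ∂μ = ⨆ f ∈ S, ∫⁻ ω, f ω ∂μ ∧
      ∀ f ∈ S, f ≤ᵐ[μ] Φ := by
  rcases S.eq_empty_or_nonempty with rfl | hne
  · exact ⟨0, measurable_const, by simp, by simp⟩
  obtain ⟨u, -, hu, huS⟩ :=
    exists_seq_tendsto_sSup (hne.image fun f => ∫⁻ ω, f ω ∂μ) (OrderTop.bddAbove _)
  rw [sSup_image] at hu
  choose f hfS hfu using huS
  have hFS : ∀ n, partialSups f n ∈ S := fun n => by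
    rw [partialSups_eq_sup'_range]
    exact hS.finsetSup'_mem _ fun i _ => hfS i
  set Φ := fun ω => ⨆ n, partialSups f n ω
  have hΦ : ∫⁻ ω, Φ ω ∂μ = ⨆ f ∈ S, ∫⁻ ω, f ω ∂μ := by
    refine le_antisymm (lintegral_iSup_le_biSup_of_monotone hmeas (partialSups_monotone f) hFS)
      (le_of_tendsto' hu fun n => ?_)
    rw [← hfu n]
    exact lintegral_mono fun ω => (le_partialSups f n ω).trans (le_iSup (partialSups f · ω) n)
  have hΦmeas : Measurable Φ := Measurable.iSup fun n => hmeas _ (hFS n)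
  refine ⟨Φ, hΦmeas, hΦ, fun ζ hζ => ?_⟩
  -- `Φ ⊔ ζ` is again a monotone limit in `S`, so its integral cannot exceed that of `Φ`.
  have hΦζ : Φ ⊔ ζ = fun ω => ⨆ n, (partialSups f n ⊔ ζ) ω := funext fun ω => iSup_sup
  have hle : ∫⁻ ω, (Φ ⊔ ζ) ω ∂μ ≤ ∫⁻ ω, Φ ω ∂μ := by
    rw [hΦζ, hΦ]
    exact lintegral_iSup_le_biSup_of_monotone hmeas
      (fun m n hmn => sup_le_sup_right (partialSups_monotone f hmn) ζ) fun n => hS (hFS n) hζ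
  filter_upwards [ae_eq_of_ae_le_of_lintegral_le (ae_of_all _ fun ω => le_sup_left)
    (hΦ ▸ hfin) (hΦmeas.sup (hmeas ζ hζ)).aemeasurable hle] with ω hω
  exact le_sup_right.trans hω.symm.le

end EssentialSupremum

section RpowInv

variable {p : ℝ}

theorem norm_le_toReal_rpow_inv {E : Type*} [SeminormedAddCommGroup E] (hp : 0 < p) {x : E}
    {a : ℝ≥0∞} (ha : a ≠ ∞) (h : ‖x‖ₑ ^ p ≤ a) : ‖x‖ ≤ (a ^ p⁻¹).toReal := by
  rw [← toReal_enorm]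
  exact toReal_mono (rpow_ne_top_of_nonneg (inv_nonneg.2 hp.le) ha) ((le_rpow_inv_iff hp).2 h)

theorem memLp_toReal_rpow_inv {Ω : Type*} {mΩ : MeasurableSpace Ω} {μ : Measure Ω} (hp : 0 < p)
    {Φ : Ω → ℝ≥0∞} (hΦ : Measurable Φ) (hfin : ∫⁻ ω, Φ ω ∂μ ≠ ∞) :
    MemLp (fun ω => (Φ ω ^ p⁻¹).toReal) (ENNReal.ofReal p) μ := by
  refine ⟨(hΦ.pow_const p⁻¹).ennreal_toReal.aestronglyMeasurable, ?_⟩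
  rw [eLpNorm_lt_top_iff_lintegral_rpow_enorm_lt_top (by simpa using hp) ofReal_ne_top,
    toReal_ofReal hp.le]
  refine lt_of_le_of_lt (lintegral_mono fun ω => ?_) hfin.lt_top
  calc ‖(Φ ω ^ p⁻¹).toReal‖ₑ ^ p ≤ (Φ ω ^ p⁻¹) ^ p := by
        gcongr
        rw [Real.enorm_eq_ofReal toReal_nonneg]
        exact ofReal_toReal_le
    _ = Φ ω := rpow_inv_rpow hp.ne' _

end RpowInv

theorem stmt_6_general {Ω : Type*} {mΩ : MeasurableSpace Ω} {μ : Measure Ω}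
    {d : ℕ} (G : MeasurableSpace Ω) (hG : G ≤ mΩ) (p : ℝ) (hp : 1 ≤ p)
    (K : Set (Ω → EuclideanSpace ℝ (Fin d)))
    (hKmeas : ∀ f ∈ K, StronglyMeasurable[G] f) :
    (∃ ξ : Ω → ℝ, MemLp ξ (ENNReal.ofReal p) μ ∧ ∀ ζ ∈ K, ∀ᵐ ω ∂μ, ‖ζ ω‖ ≤ ξ ω) ↔
    (∃ M : ℝ≥0∞, M ≠ ⊤ ∧ ∀ g ∈ decHull G K, ∫⁻ ω, (‖g ω‖₊ : ℝ≥0∞) ^ p ∂μ ≤ M) := by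
  have hp0 : 0 < p := by linarith
  constructor
  · rintro ⟨ξ, hξ, hdom⟩
    refine ⟨∫⁻ ω, ‖ξ ω‖ₑ ^ p ∂μ, ?_, fun g hg => lintegral_mono_ae ?_⟩
    · simpa [toReal_ofReal hp0.le] using
        (lintegral_rpow_enorm_lt_top_of_eLpNorm_lt_top (by simpa using hp0) ofReal_ne_top
          hξ.eLpNorm_lt_top).ne
    · filter_upwards [ae_of_mem_decHull (P := fun ω x => ‖x‖ ≤ ξ ω) hdom hg] with ω hω
      gcongr
      exact enorm_le_iff_norm_le.2 (hω.trans (Real.le_norm_self _))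
  · rintro ⟨M, hM, hbound⟩
    set Ψ := fun x : EuclideanSpace ℝ (Fin d) => (‖x‖₊ : ℝ≥0∞) ^ p
    have hΨ : Continuous Ψ := by fun_prop
    set S := (fun g ω => Ψ (g ω)) '' decHull G K
    have hSmeas : ∀ f ∈ S, Measurable[mΩ] f := by
      rintro _ ⟨g, hg, rfl⟩
      exact hΨ.measurable.comp ((stronglyMeasurable_of_mem_decHull hKmeas hg).mono hG).measurable
    have hSfin : ⨆ f ∈ S, ∫⁻ ω, f ω ∂μ ≠ ∞ :=
      ne_top_of_le_ne_top hM (iSup₂_le fun _ ⟨g, hg, hgf⟩ => hgf ▸ hbound g hg)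
    obtain ⟨Φ, hΦmeas, hΦ, hdom⟩ :=
      (supClosed_image_decHull hKmeas hΨ).exists_ae_le_of_iSup_lintegral_ne_top hSmeas hSfin
    refine ⟨_, memLp_toReal_rpow_inv hp0 hΦmeas (hΦ ▸ hSfin), fun ζ hζ => ?_⟩
    filter_upwards [hdom _ ⟨ζ, subset_decHull hζ, rfl⟩, ae_lt_top hΦmeas (hΦ ▸ hSfin)]
      with ω hζΦ hΦω
    exact norm_le_toReal_rpow_inv hp0 hΦω.ne hζΦ

/-- A nonempty set `K ⊆ L^p(Ω, G; ℝ^d)` is dominated in `L^p` iff its `G`-decomposable hull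
is bounded in `L^p`. -/
theorem stmt_6 {Ω : Type*} {mΩ : MeasurableSpace Ω} {μ : Measure Ω} [IsProbabilityMeasure μ]
    {d : ℕ} (G : MeasurableSpace Ω) (hG : G ≤ mΩ) (p : ℝ) (hp : 1 ≤ p)
    (K : Set (Ω → EuclideanSpace ℝ (Fin d))) (hKne : K.Nonempty)
    (hKmeas : ∀ f ∈ K, StronglyMeasurable[G] f)
    (hKLp : ∀ f ∈ K, MemLp f (ENNReal.ofReal p) μ) :
    (∃ ξ : Ω → ℝ, MemLp ξ (ENNReal.ofReal p) μ ∧ ∀ ζ ∈ K, ∀ᵐ ω ∂μ, ‖ζ ω‖ ≤ ξ ω) ↔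
    (∃ M : ℝ≥0∞, M ≠ ⊤ ∧ ∀ g ∈ decHull G K, ∫⁻ ω, (‖g ω‖₊ : ℝ≥0∞) ^ p ∂μ ≤ M) :=
  stmt_6_general G hG p hp K hKmeas
end
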